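/- Iterated trace formula: for Φ ∈ Λ^k V* ⊗ Λ^h W and r ≥ 0, tr^{r+1}(θ ⩕ Φ) = θ ⩕ tr^{r+1}(Φ) + (r+1)(m − k − h + r) tr^r(Φ). -/

import Mathlib

/-!
The contraction `c` with a bilinear form `B` is an antiderivation,
`c x (ι y * w) = B x y • w - ι y * c x w`, and for a pseudo-orthonormal frame `(fₐ, εₐ)` the
operator `∑ εₐ ι(fₐ) c(fₐ)` multiplies a `k`-vector by `k`. Applying the Leibniz rule in both
tensor factors of `tr (θ * (x ⊗ y))`, the cross terms recombine into `θ * tr (x ⊗ y)` and the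
diagonal terms give `m - k - h`; so `[tr, θ *] = m - k - h` on bidegree `(k, h)`. Since `tr`
lowers the bidegree by `(1, 1)`, iterating adds up
`∑_{j ≤ r} (m - k - h + 2j) = (r + 1)(m - k - h + r)`.
-/

open TensorProduct ExteriorAlgebra

noncomputable section

/-- Wedge product of a finite family of vectors, as an element of the exterior algebra. -/
def wedgeL {M : Type} [AddCommGroup M] [Module ℝ M] {n : ℕ} (v : Fin n → M) :
    ExteriorAlgebra ℝ M :=
  (List.ofFn fun i => ι ℝ (v i)).prod

/-- The bigraded algebra `Λ V* ⊗ Λ ℝ^m` of vector-valued forms, with `U` playing the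
role of `V*` and `Fin m → ℝ` the role of `W = ℝ^m`. -/
abbrev Omega (U : Type) [AddCommGroup U] [Module ℝ U] (m : ℕ) : Type :=
  ExteriorAlgebra ℝ U ⊗[ℝ] ExteriorAlgebra ℝ (Fin m → ℝ)

/-- The subspace of bidegree `(k, h)` elements: `Λ^k U ⊗ Λ^h ℝ^m`. -/
def bideg (U : Type) [AddCommGroup U] [Module ℝ U] (m k h : ℕ) :
    Submodule ℝ (Omega U m) :=
  Submodule.map₂ (TensorProduct.mk ℝ _ _) (⋀[ℝ]^k U) (⋀[ℝ]^h (Fin m → ℝ))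

/-- The solder element `θ = Σ_a θ^a ⊗ T_a`, where `T_a` is the standard basis of `ℝ^m`. -/
def solder {U : Type} [AddCommGroup U] [Module ℝ U] {m : ℕ} (u : Fin m → U) : Omega U m :=
  ∑ a, ι ℝ (u a) ⊗ₜ[ℝ] ι ℝ (Pi.single a 1)

/-- The composite volume element `ν = ν_g ⊗ n_h` (wedge of the dual orthonormal basis
tensor the wedge of the standard basis). -/
def vol {U : Type} [AddCommGroup U] [Module ℝ U] {m : ℕ} (u : Fin m → U) : Omega U m :=
  wedgeL u ⊗ₜ[ℝ] wedgeL (fun a : Fin m => Pi.single a (1 : ℝ))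

/-- The trace operator: contraction with `θ^♯`, i.e. `tr Φ = Σ_a (ι_{(u a)^♯} ⊗ ι_{(T a)^♭}) Φ`. -/
def trOp {U : Type} [AddCommGroup U] [Module ℝ U] {m : ℕ} (u : Fin m → U)
    (cU : U → Module.End ℝ (ExteriorAlgebra ℝ U))
    (cW : (Fin m → ℝ) → Module.End ℝ (ExteriorAlgebra ℝ (Fin m → ℝ))) :
    Module.End ℝ (Omega U m) :=
  ∑ a, TensorProduct.map (cU (u a)) (cW (Pi.single a 1))

section Contraction

variable {M : Type} [AddCommGroup M] [Module ℝ M]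

theorem wedgeL_cons {n : ℕ} (y : M) (v : Fin n → M) :
    wedgeL (Fin.cons y v) = ι ℝ y * wedgeL v := by
  simp [wedgeL, List.ofFn_succ]

theorem wedgeL_mem_exteriorPower {n : ℕ} (v : Fin n → M) : wedgeL v ∈ ⋀[ℝ]^n M :=
  ιMulti_range ℝ n ⟨v, ιMulti_apply v⟩

theorem exteriorPower_eq_span_wedgeL (n : ℕ) :
    ⋀[ℝ]^n M = Submodule.span ℝ (Set.range fun v : Fin n → M => wedgeL v) :=
  (ιMulti_span_fixedDegree ℝ n).symm

def IsContraction (B : M →ₗ[ℝ] M →ₗ[ℝ] ℝ) (c : M → Module.End ℝ (ExteriorAlgebra ℝ M)) : Prop :=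
  ∀ (x : M) (n : ℕ) (v : Fin n → M),
    c x (wedgeL v) = ∑ i : Fin n, ((-1 : ℝ) ^ (i : ℕ) * B x (v i)) •
      ((List.ofFn fun j => ι ℝ (v j)).eraseIdx (i : ℕ)).prod

theorem ι_mul_ι_comm (x y : M) : ι ℝ x * ι ℝ y = -(ι ℝ y * ι ℝ x) :=
  eq_neg_of_add_eq_zero_left (ι_add_mul_swap x y)

namespace IsContraction

variable {B : M →ₗ[ℝ] M →ₗ[ℝ] ℝ} {c : M → Module.End ℝ (ExteriorAlgebra ℝ M)}

theorem apply_wedgeL_zero (hc : IsContraction B c) (x : M) (v : Fin 0 → M) :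
    c x (wedgeL v) = 0 := by
  simp [hc x 0 v]

theorem apply_ι_mul_wedgeL (hc : IsContraction B c) (x y : M) {n : ℕ} (v : Fin n → M) :
    c x (ι ℝ y * wedgeL v) = B x y • wedgeL v - ι ℝ y * c x (wedgeL v) := by
  rw [← wedgeL_cons, hc x (n + 1), Fin.sum_univ_succ, hc x n, Finset.mul_sum, sub_eq_add_neg,
    ← Finset.sum_neg_distrib]
  simp only [Fin.cons_zero, Fin.cons_succ, Fin.val_zero, Fin.val_succ, List.ofFn_succ,
    List.eraseIdx_cons_zero, List.eraseIdx_cons_succ, List.prod_cons, pow_zero, one_mul, wedgeL]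
  congr 1
  refine Finset.sum_congr rfl fun i _ => ?_
  rw [mul_smul_comm, ← neg_smul, pow_succ]
  congr 1
  ring

theorem apply_wedgeL_mem (hc : IsContraction B c) (x : M) {n : ℕ} (v : Fin (n + 1) → M) :
    c x (wedgeL v) ∈ ⋀[ℝ]^n M := by
  rw [← Fin.cons_self_tail v, wedgeL_cons, hc.apply_ι_mul_wedgeL]
  refine sub_mem (Submodule.smul_mem _ _ (wedgeL_mem_exteriorPower _)) ?_
  cases n with
  | zero => simp [hc.apply_wedgeL_zero]
  | succ n =>
    rw [exteriorPower, pow_succ']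
    exact Submodule.mul_mem_mul (LinearMap.mem_range_self _ _) (hc.apply_wedgeL_mem x _)

theorem apply_mem_exteriorPower (hc : IsContraction B c) (x : M) {n : ℕ}
    {w : ExteriorAlgebra ℝ M} (hw : w ∈ ⋀[ℝ]^(n + 1) M) : c x w ∈ ⋀[ℝ]^n M := by
  rw [exteriorPower_eq_span_wedgeL] at hw
  exact (Submodule.span_le (p := (⋀[ℝ]^n M).comap (c x))).2
    (by rintro _ ⟨v, rfl⟩; exact hc.apply_wedgeL_mem x v) hw

theorem apply_eq_zero_of_mem_exteriorPower_zero (hc : IsContraction B c) (x : M)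
    {w : ExteriorAlgebra ℝ M} (hw : w ∈ ⋀[ℝ]^0 M) : c x w = 0 := by
  rw [exteriorPower_eq_span_wedgeL] at hw
  exact (Submodule.span_le (p := LinearMap.ker (c x))).2
    (by rintro _ ⟨v, rfl⟩; exact hc.apply_wedgeL_zero x v) hw

theorem sum_smul_ι_mul_apply_wedgeL (hc : IsContraction B c) {ι' : Type*} [Fintype ι']
    (f : ι' → M) (ε : ι' → ℝ) (hf : ∀ x : M, ∑ a, (ε a * B (f a) x) • f a = x) {n : ℕ}
    (v : Fin n → M) :
    ∑ a, ε a • (ι ℝ (f a) * c (f a) (wedgeL v)) = (n : ℝ) • wedgeL v := by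
  induction n with
  | zero => simp [hc.apply_wedgeL_zero]
  | succ n ih =>
    obtain ⟨y, t, rfl⟩ : ∃ y t, v = Fin.cons y t := ⟨_, _, (Fin.cons_self_tail v).symm⟩
    have hterm : ∀ a, ε a • (ι ℝ (f a) * c (f a) (ι ℝ y * wedgeL t)) = (ε a * B (f a) y) •
        ι ℝ (f a) * wedgeL t + ι ℝ y * (ε a • (ι ℝ (f a) * c (f a) (wedgeL t))) := by
      intro a
      rw [hc.apply_ι_mul_wedgeL, mul_sub, ← mul_assoc, ι_mul_ι_comm]
      simp only [mul_smul_comm, smul_mul_assoc, neg_mul, mul_assoc, sub_neg_eq_add, smul_add,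
        smul_smul]
    have hy : ∑ a, (ε a * B (f a) y) • ι ℝ (f a) = ι ℝ y := by
      simp_rw [← map_smul, ← map_sum, hf]
    rw [wedgeL_cons, Finset.sum_congr rfl fun a _ => hterm a, Finset.sum_add_distrib,
      ← Finset.sum_mul, ← Finset.mul_sum, hy, ih]
    push_cast
    rw [mul_smul_comm, add_smul, one_smul, add_comm]

end IsContraction

end Contraction

theorem Module.Basis.sum_mul_apply_smul_eq_self {M ι' : Type*} [AddCommGroup M] [Module ℝ M]
    [Fintype ι'] [DecidableEq ι'] (f : Module.Basis ι' ℝ M) {B : M →ₗ[ℝ] M →ₗ[ℝ] ℝ}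
    {ε : ι' → ℝ} (hε : ∀ a, ε a * ε a = 1) (hB : ∀ a b, B (f a) (f b) = if a = b then ε a else 0)
    (x : M) : ∑ a, (ε a * B (f a) x) • f a = x := by
  have hBx : ∀ a, B (f a) x = ε a * f.repr x a := fun a => by
    conv_lhs => rw [← f.sum_repr x]
    simp only [map_sum, map_smul, hB, smul_eq_mul, mul_ite, mul_zero, Finset.sum_ite_eq,
      Finset.mem_univ, if_true]
    exact mul_comm _ _
  conv_rhs => rw [← f.sum_repr x]
  simp_rw [hBx, ← mul_assoc, hε, one_mul]

theorem single_apply_single_of_eq_sum {m : ℕ} {η : (Fin m → ℝ) →ₗ[ℝ] (Fin m → ℝ) →ₗ[ℝ] ℝ}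
    {ε : Fin m → ℝ} (hη : ∀ v w, η v w = ∑ a, ε a * v a * w a) (a b : Fin m) :
    η (Pi.single a 1) (Pi.single b 1) = if a = b then ε a else 0 := by
  rw [hη]
  rcases eq_or_ne a b with rfl | hab
  · simp [Pi.single_apply]
  · simp [Pi.single_apply, hab, hab.symm]

section Omega

variable {U : Type} [AddCommGroup U] [Module ℝ U] {m : ℕ}

theorem bideg_eq_span (k h : ℕ) :
    bideg U m k h = Submodule.span ℝ (Set.image2 (fun x y => x ⊗ₜ[ℝ] y)
      (Set.range fun v : Fin k → U => wedgeL v)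
      (Set.range fun w : Fin h → Fin m → ℝ => wedgeL w)) := by
  rw [bideg, exteriorPower_eq_span_wedgeL, exteriorPower_eq_span_wedgeL, Submodule.map₂_span_span]
  rfl

theorem eqOn_bideg {k h : ℕ} {L₁ L₂ : Module.End ℝ (Omega U m)}
    (H : ∀ (v : Fin k → U) (w : Fin h → Fin m → ℝ),
      L₁ (wedgeL v ⊗ₜ[ℝ] wedgeL w) = L₂ (wedgeL v ⊗ₜ[ℝ] wedgeL w)) :
    Set.EqOn L₁ L₂ (bideg U m k h) := by
  rw [bideg_eq_span]
  exact LinearMap.eqOn_span' (by rintro _ ⟨_, ⟨v, rfl⟩, _, ⟨w, rfl⟩, rfl⟩; exact H v w)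

variable (u : Fin m → U) (cU : U → Module.End ℝ (ExteriorAlgebra ℝ U))
  (cW : (Fin m → ℝ) → Module.End ℝ (ExteriorAlgebra ℝ (Fin m → ℝ)))

@[simp]
theorem trOp_tmul (x : ExteriorAlgebra ℝ U) (y : ExteriorAlgebra ℝ (Fin m → ℝ)) :
    trOp u cU cW (x ⊗ₜ[ℝ] y) = ∑ a, cU (u a) x ⊗ₜ[ℝ] cW (Pi.single a 1) y := by
  simp [trOp]

theorem solder_mul_tmul (x : ExteriorAlgebra ℝ U) (y : ExteriorAlgebra ℝ (Fin m → ℝ)) :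
    solder u * (x ⊗ₜ[ℝ] y) = ∑ a, (ι ℝ (u a) * x) ⊗ₜ[ℝ] (ι ℝ (Pi.single a (1 : ℝ)) * y) := by
  simp [solder, Finset.sum_mul]

variable {u cU cW} {g : U →ₗ[ℝ] U →ₗ[ℝ] ℝ} {η : (Fin m → ℝ) →ₗ[ℝ] (Fin m → ℝ) →ₗ[ℝ] ℝ}

theorem trOp_mem_bideg (hcU : IsContraction g cU) (hcW : IsContraction η cW) {k h : ℕ}
    {Φ : Omega U m} (hΦ : Φ ∈ bideg U m (k + 1) (h + 1)) : trOp u cU cW Φ ∈ bideg U m k h := by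
  refine (Submodule.map₂_le (r := (bideg U m k h).comap (trOp u cU cW))).2
    (fun x hx y hy => ?_) hΦ
  simp only [Submodule.mem_comap, TensorProduct.mk_apply, trOp_tmul]
  exact Submodule.sum_mem _ fun a _ => Submodule.apply_mem_map₂ _
    (hcU.apply_mem_exteriorPower _ hx) (hcW.apply_mem_exteriorPower _ hy)

theorem trOp_eq_zero_of_mem_bideg (hcU : IsContraction g cU) (hcW : IsContraction η cW)
    {k h : ℕ} (hkh : k = 0 ∨ h = 0) {Φ : Omega U m} (hΦ : Φ ∈ bideg U m k h) :
    trOp u cU cW Φ = 0 := by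
  refine (Submodule.map₂_le (r := LinearMap.ker (trOp u cU cW))).2 (fun x hx y hy => ?_) hΦ
  obtain rfl | rfl := hkh
  · simp [hcU.apply_eq_zero_of_mem_exteriorPower_zero _ hx]
  · simp [hcW.apply_eq_zero_of_mem_exteriorPower_zero _ hy]

end Omega

section TraceFormula

variable {U : Type} [AddCommGroup U] [Module ℝ U] {m : ℕ} {u : Fin m → U}
  {cU : U → Module.End ℝ (ExteriorAlgebra ℝ U)}
  {cW : (Fin m → ℝ) → Module.End ℝ (ExteriorAlgebra ℝ (Fin m → ℝ))}
  {g : U →ₗ[ℝ] U →ₗ[ℝ] ℝ} {η : (Fin m → ℝ) →ₗ[ℝ] (Fin m → ℝ) →ₗ[ℝ] ℝ} {ε : Fin m → ℝ}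
  (hcU : IsContraction g cU) (hcW : IsContraction η cW) (hε : ∀ a, ε a * ε a = 1)
  (hgu : ∀ a b, g (u a) (u b) = if a = b then ε a else 0)
  (hηe : ∀ a b, η (Pi.single a 1) (Pi.single b 1) = if a = b then ε a else 0)
  (hU : ∀ x, ∑ a, (ε a * g (u a) x) • u a = x)
  (hW : ∀ y, ∑ a, (ε a * η (Pi.single a 1) y) • (Pi.single a 1 : Fin m → ℝ) = y)
include hcU hcW hε hgu hηe hU hW

theorem trOp_solder_mul_wedgeL_tmul {k h : ℕ} (v : Fin k → U) (w : Fin h → Fin m → ℝ) :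
    trOp u cU cW (solder u * (wedgeL v ⊗ₜ[ℝ] wedgeL w)) =
      solder u * trOp u cU cW (wedgeL v ⊗ₜ[ℝ] wedgeL w) +
        ((m : ℝ) - k - h) • (wedgeL v ⊗ₜ[ℝ] wedgeL w) := by
  -- only the diagonal `b = a` carries the scalar terms of the two Leibniz rules
  have hterm : ∀ a b,
      cU (u b) (ι ℝ (u a) * wedgeL v) ⊗ₜ[ℝ] cW (Pi.single b 1) (ι ℝ (Pi.single a 1) * wedgeL w) =
        (ι ℝ (u a) * cU (u b) (wedgeL v)) ⊗ₜ[ℝ]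
            (ι ℝ (Pi.single a 1) * cW (Pi.single b 1) (wedgeL w)) +
          if b = a then wedgeL v ⊗ₜ[ℝ] wedgeL w
            - wedgeL v ⊗ₜ[ℝ] (ε a • (ι ℝ (Pi.single a 1) * cW (Pi.single a 1) (wedgeL w)))
            - (ε a • (ι ℝ (u a) * cU (u a) (wedgeL v))) ⊗ₜ[ℝ] wedgeL w
          else 0 := by
    intro a b
    rw [hcU.apply_ι_mul_wedgeL, hcW.apply_ι_mul_wedgeL, hgu, hηe]
    split_ifs with hba
    · subst hba
      simp only [sub_tmul, tmul_sub, ← smul_tmul', tmul_smul]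
      linear_combination (norm := module) hε b • (wedgeL v ⊗ₜ[ℝ] wedgeL w)
    · simp only [zero_smul, zero_sub, neg_tmul, tmul_neg, neg_neg, add_zero]
  have hX := hcU.sum_smul_ι_mul_apply_wedgeL u ε hU v
  have hY := hcW.sum_smul_ι_mul_apply_wedgeL (fun a => Pi.single a 1) ε hW w
  rw [solder_mul_tmul, map_sum, trOp_tmul, Finset.mul_sum]
  simp_rw [trOp_tmul, hterm, solder_mul_tmul, Finset.sum_add_distrib, Finset.sum_ite_eq',
    Finset.mem_univ, if_true, Finset.sum_sub_distrib, ← tmul_sum, ← sum_tmul, hX, hY,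
    Finset.sum_const, Finset.card_univ, Fintype.card_fin, tmul_smul, ← smul_tmul']
  rw [Finset.sum_comm]
  module

theorem trOp_solder_mul {k h : ℕ} {Φ : Omega U m} (hΦ : Φ ∈ bideg U m k h) :
    trOp u cU cW (solder u * Φ) = solder u * trOp u cU cW Φ + ((m : ℝ) - k - h) • Φ := by
  have key := eqOn_bideg (L₁ := trOp u cU cW ∘ₗ LinearMap.mulLeft ℝ (solder u))
    (L₂ := LinearMap.mulLeft ℝ (solder u) ∘ₗ trOp u cU cW + ((m : ℝ) - k - h) • LinearMap.id)
    (fun v w => by simpa only [LinearMap.comp_apply, LinearMap.add_apply, LinearMap.smul_apply,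
      LinearMap.id_apply, LinearMap.mulLeft_apply]
        using trOp_solder_mul_wedgeL_tmul hcU hcW hε hgu hηe hU hW v w) hΦ
  simpa only [LinearMap.comp_apply, LinearMap.add_apply, LinearMap.smul_apply,
    LinearMap.id_apply, LinearMap.mulLeft_apply] using key

theorem trOp_pow_succ_solder_mul (r : ℕ) {k h : ℕ} {Φ : Omega U m} (hΦ : Φ ∈ bideg U m k h) :
    (trOp u cU cW ^ (r + 1)) (solder u * Φ) = solder u * (trOp u cU cW ^ (r + 1)) Φ +
      (((r : ℝ) + 1) * ((m : ℝ) - k - h + r)) • (trOp u cU cW ^ r) Φ := by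
  induction r generalizing k h Φ with
  | zero => simpa using trOp_solder_mul hcU hcW hε hgu hηe hU hW hΦ
  | succ r ih =>
    rw [pow_succ, Module.End.mul_apply, trOp_solder_mul hcU hcW hε hgu hηe hU hW hΦ, map_add,
      map_smul]
    by_cases hkh : k = 0 ∨ h = 0
    · simp [pow_succ, trOp_eq_zero_of_mem_bideg hcU hcW hkh hΦ]
    obtain ⟨k, rfl⟩ := Nat.exists_eq_succ_of_ne_zero (not_or.mp hkh).1
    obtain ⟨h, rfl⟩ := Nat.exists_eq_succ_of_ne_zero (not_or.mp hkh).2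
    rw [ih (trOp_mem_bideg hcU hcW hΦ), ← Module.End.mul_apply (trOp u cU cW ^ r), ← pow_succ,
      add_assoc, ← add_smul]
    congr 2
    push_cast
    ring

end TraceFormula

theorem stmt_14_general (m s k h : ℕ)
    (U : Type) [AddCommGroup U] [Module ℝ U]
    (η : (Fin m → ℝ) →ₗ[ℝ] (Fin m → ℝ) →ₗ[ℝ] ℝ)
    (hη : ∀ v w, η v w = ∑ a : Fin _, (if (a : ℕ) < s then (-1 : ℝ) else 1) * v a * w a)
    (g : U →ₗ[ℝ] U →ₗ[ℝ] ℝ) (u : Module.Basis (Fin m) ℝ U)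
    (hg : ∀ a b, g (u a) (u b) = if a = b then (if (a : ℕ) < s then (-1 : ℝ) else 1) else 0)
    (cU : U → Module.End ℝ (ExteriorAlgebra ℝ U))
    (hcU : ∀ (x : U) (n : ℕ) (v : Fin n → U),
      cU x (wedgeL v) = ∑ i : Fin n, ((-1 : ℝ) ^ (i : ℕ) * g x (v i)) •
        ((List.ofFn fun j => ι ℝ (v j)).eraseIdx (i : ℕ)).prod)
    (cW : (Fin m → ℝ) → Module.End ℝ (ExteriorAlgebra ℝ (Fin m → ℝ)))
    (hcW : ∀ (y : Fin m → ℝ) (n : ℕ) (v : Fin n → (Fin m → ℝ)),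
      cW y (wedgeL v) = ∑ i : Fin n, ((-1 : ℝ) ^ (i : ℕ) * η y (v i)) •
        ((List.ofFn fun j => ι ℝ (v j)).eraseIdx (i : ℕ)).prod)
    (r : ℕ) (Φ : Omega U m) (hΦ : Φ ∈ bideg U m k h) :
    (trOp (fun a => u a) cU cW ^ (r + 1)) (solder (fun a => u a) * Φ) =
      solder (fun a => u a) * (trOp (fun a => u a) cU cW ^ (r + 1)) Φ +
        (((r : ℝ) + 1) * ((m : ℝ) - (k : ℝ) - (h : ℝ) + (r : ℝ))) •
          (trOp (fun a => u a) cU cW ^ r) Φ := by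
  set ε : Fin m → ℝ := fun a => if (a : ℕ) < s then -1 else 1
  have hε : ∀ a, ε a * ε a = 1 := fun a => by
    simp only [ε]
    split_ifs <;> norm_num
  have hηe := single_apply_single_of_eq_sum hη
  have hW := (Pi.basisFun ℝ (Fin m)).sum_mul_apply_smul_eq_self hε (B := η)
    (by simpa using hηe)
  simp only [Pi.basisFun_apply] at hW
  exact trOp_pow_succ_solder_mul hcU hcW hε hg hηe (u.sum_mul_apply_smul_eq_self hε hg) hW r hΦ

/-- Iterated trace formula:
`tr^{r+1}(θ ⩕ Φ) = θ ⩕ tr^{r+1}(Φ) + (r+1)(m − k − h + r) tr^r(Φ)`. -/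
theorem stmt_14 (m q s k h : ℕ) (hm : q + s = m)
    (U : Type) [AddCommGroup U] [Module ℝ U]
    (η : (Fin m → ℝ) →ₗ[ℝ] (Fin m → ℝ) →ₗ[ℝ] ℝ)
    (hη : ∀ v w, η v w = ∑ a : Fin _, (if (a : ℕ) < s then (-1 : ℝ) else 1) * v a * w a)
    (g : U →ₗ[ℝ] U →ₗ[ℝ] ℝ) (u : Module.Basis (Fin m) ℝ U)
    (hg : ∀ a b, g (u a) (u b) = if a = b then (if (a : ℕ) < s then (-1 : ℝ) else 1) else 0)
    (cU : U → Module.End ℝ (ExteriorAlgebra ℝ U))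
    (hcU : ∀ (x : U) (n : ℕ) (v : Fin n → U),
      cU x (wedgeL v) = ∑ i : Fin n, ((-1 : ℝ) ^ (i : ℕ) * g x (v i)) •
        ((List.ofFn fun j => ι ℝ (v j)).eraseIdx (i : ℕ)).prod)
    (cW : (Fin m → ℝ) → Module.End ℝ (ExteriorAlgebra ℝ (Fin m → ℝ)))
    (hcW : ∀ (y : Fin m → ℝ) (n : ℕ) (v : Fin n → (Fin m → ℝ)),
      cW y (wedgeL v) = ∑ i : Fin n, ((-1 : ℝ) ^ (i : ℕ) * η y (v i)) •
        ((List.ofFn fun j => ι ℝ (v j)).eraseIdx (i : ℕ)).prod)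
    (r : ℕ) (Φ : Omega U m) (hΦ : Φ ∈ bideg U m k h) :
    (trOp (fun a => u a) cU cW ^ (r + 1)) (solder (fun a => u a) * Φ) =
      solder (fun a => u a) * (trOp (fun a => u a) cU cW ^ (r + 1)) Φ +
        (((r : ℝ) + 1) * ((m : ℝ) - (k : ℝ) - (h : ℝ) + (r : ℝ))) •
          (trOp (fun a => u a) cU cW ^ r) Φ :=
  stmt_14_general m s k h U η hη g u hg cU hcU cW hcW r Φ hΦ
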